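/- arXiv:0802.2626 — 2 statements merged into one kernel-verified Lean document; each statement's English description precedes it below -/
import Mathlib

section
/- Let n ≥ 1, let f_{ij} : ℝⁿ → ℝ (1 ≤ i, j ≤ n) be functions with f_{ij} = f_{ji}, let g₁, …, g_n : ℝⁿ → ℝ be C¹, and let k : ℝⁿ → ℝ be a function such that ∂_{p^j} g_i + ∂_{p^i} g_j = 2 k f_{ij} holds on ℝⁿ for all i, j. Then for every open Ω ⊆ ℝⁿ and every C² function u : Ω → ℝ satisfying Σ_{i,j} f_{ij}(∇u) u_{x_i x_j} = 0 on Ω, the conservation law Σ_i ∂_{x_i} ( g_i(∇u) ) = 0 holds on Ω. -/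
/-!
Along a solution `u`, the chain rule gives `Σᵢ ∂_{xᵢ}(gᵢ(∇u)) = Σᵢⱼ (∂_{pʲ} gᵢ)(∇u) u_{xᵢxⱼ}`.
Since the Hessian of `u` is symmetric, only the symmetric part `½ (∂_{pʲ} gᵢ + ∂_{pⁱ} gⱼ) = k f_{ij}`
of the Jacobian of `g` contributes, so the sum equals `k(∇u) Σᵢⱼ f_{ij}(∇u) u_{xᵢxⱼ} = 0`.
-/

/-- Partial derivative of `f : ℝⁿ → ℝ` in the `i`-th coordinate direction. -/
noncomputable def pd {n : ℕ} (i : Fin n) (f : (Fin n → ℝ) → ℝ) (x : Fin n → ℝ) : ℝ :=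
  fderiv ℝ f x (Pi.single i 1)

lemma two_mul_sum_sum_mul_of_symm {ι R : Type*} [Fintype ι] [CommSemiring R]
    (A H : ι → ι → R) (hH : ∀ i j, H i j = H j i) :
    2 * ∑ i, ∑ j, A i j * H i j = ∑ i, ∑ j, (A i j + A j i) * H i j := by
  have hswap : ∑ i, ∑ j, A j i * H i j = ∑ i, ∑ j, A i j * H i j := by
    rw [Finset.sum_comm]
    simp only [hH]
  simp only [add_mul, Finset.sum_add_distrib, hswap, two_mul]

section PartialDerivatives

variable {n : ℕ}

lemma fderiv_apply_eq_sum_pd (g : (Fin n → ℝ) → ℝ) (p v : Fin n → ℝ) :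
    fderiv ℝ g p v = ∑ l, v l * pd l g p := by
  conv_lhs => rw [pi_eq_sum_univ' v]
  simp only [map_sum, map_smul, smul_eq_mul, pd]

lemma pd_comp {g : (Fin n → ℝ) → ℝ} {G : (Fin n → ℝ) → Fin n → ℝ} {x : Fin n → ℝ}
    (hg : DifferentiableAt ℝ g (G x)) (hG : DifferentiableAt ℝ G x) (i : Fin n) :
    pd i (fun y => g (G y)) x = ∑ l, pd l g (G x) * pd i (fun y => G y l) x := by
  have hGl : ∀ l, fderiv ℝ G x (Pi.single i 1) l = pd i (fun y => G y l) x := fun l => by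
    rw [pd, fderiv_apply hG l]
    rfl
  rw [pd, fderiv_fun_comp x hg hG, ContinuousLinearMap.comp_apply, fderiv_apply_eq_sum_pd]
  simp only [hGl, mul_comm]

variable {u : (Fin n → ℝ) → ℝ} {x : Fin n → ℝ}

lemma hasFDerivAt_pd (hu : DifferentiableAt ℝ (fderiv ℝ u) x) (j : Fin n) :
    HasFDerivAt (pd j u)
      ((ContinuousLinearMap.apply ℝ ℝ (Pi.single j 1)).comp (fderiv ℝ (fderiv ℝ u) x)) x :=
  ((ContinuousLinearMap.apply ℝ ℝ (Pi.single j 1)).hasFDerivAt.comp x hu.hasFDerivAt :)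

lemma differentiableAt_fderiv_of_contDiffAt_two (hu : ContDiffAt ℝ 2 u x) :
    DifferentiableAt ℝ (fderiv ℝ u) x :=
  (hu.fderiv_right (m := 1) le_rfl).differentiableAt one_ne_zero

lemma pd_pd_comm (hu : ContDiffAt ℝ 2 u x) (i j : Fin n) :
    pd i (pd j u) x = pd j (pd i u) x := by
  simp only [pd, (hasFDerivAt_pd (differentiableAt_fderiv_of_contDiffAt_two hu) _).fderiv]
  exact (hu.isSymmSndFDerivAt (by simp)).eq _ _

lemma differentiableAt_grad (hu : ContDiffAt ℝ 2 u x) :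
    DifferentiableAt ℝ (fun y l => pd l u y) x :=
  differentiableAt_pi.2 fun l =>
    (hasFDerivAt_pd (differentiableAt_fderiv_of_contDiffAt_two hu) l).differentiableAt

end PartialDerivatives

theorem conservation_law_of_integrating_factor_general
    {n : ℕ}
    (f : Fin n → Fin n → (Fin n → ℝ) → ℝ)
    (g : Fin n → (Fin n → ℝ) → ℝ)
    (hg : ∀ i, ContDiff ℝ 1 (g i))
    (k : (Fin n → ℝ) → ℝ)
    (hrel : ∀ i j : Fin n, ∀ p : Fin n → ℝ,
      pd j (g i) p + pd i (g j) p = 2 * k p * f i j p) :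
    ∀ (Ω : Set (Fin n → ℝ)), IsOpen Ω →
      ∀ u : (Fin n → ℝ) → ℝ, ContDiffOn ℝ 2 u Ω →
        (∀ x ∈ Ω, ∑ i, ∑ j, f i j (fun l => pd l u x) * pd i (pd j u) x = 0) →
        ∀ x ∈ Ω, ∑ i, pd i (fun y => g i (fun l => pd l u y)) x = 0 := by
  intro Ω hΩ u hu hsol x hx
  have hux : ContDiffAt ℝ 2 u x := hu.contDiffAt (hΩ.mem_nhds hx)
  set p : Fin n → ℝ := fun l => pd l u x
  have hchain : ∀ i, pd i (fun y => g i (fun l => pd l u y)) x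
      = ∑ l, pd l (g i) p * pd i (pd l u) x := fun i =>
    pd_comp ((hg i).differentiable one_ne_zero p) (differentiableAt_grad hux) i
  have htwice : 2 * ∑ i, ∑ l, pd l (g i) p * pd i (pd l u) x
      = 2 * k p * ∑ i, ∑ l, f i l p * pd i (pd l u) x := by
    rw [two_mul_sum_sum_mul_of_symm _ _ (pd_pd_comm hux), Finset.mul_sum]
    simp only [hrel, Finset.mul_sum, mul_assoc]
  have hsolx : ∑ i, ∑ l, f i l p * pd i (pd l u) x = 0 := hsol x hx
  rw [hsolx, mul_zero, mul_eq_zero] at htwice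
  rw [Finset.sum_congr rfl fun i _ => hchain i]
  exact htwice.resolve_left two_ne_zero

/-- If `∂_{pʲ} gᵢ + ∂_{pⁱ} gⱼ = 2 k f_{ij}` for some integrating factor `k`, then
`Σᵢ ∂_{xᵢ}(gᵢ(∇u)) = 0` holds for every solution of `Σ f_{ij}(∇u) u_{xᵢxⱼ} = 0`. -/
theorem conservation_law_of_integrating_factor
    {n : ℕ} (hn : 1 ≤ n)
    (f : Fin n → Fin n → (Fin n → ℝ) → ℝ)
    (hfsym : ∀ i j, f i j = f j i)
    (g : Fin n → (Fin n → ℝ) → ℝ)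
    (hg : ∀ i, ContDiff ℝ 1 (g i))
    (k : (Fin n → ℝ) → ℝ)
    (hrel : ∀ i j : Fin n, ∀ p : Fin n → ℝ,
      pd j (g i) p + pd i (g j) p = 2 * k p * f i j p) :
    ∀ (Ω : Set (Fin n → ℝ)), IsOpen Ω →
      ∀ u : (Fin n → ℝ) → ℝ, ContDiffOn ℝ 2 u Ω →
        (∀ x ∈ Ω, ∑ i, ∑ j, f i j (fun l => pd l u x) * pd i (pd j u) x = 0) →
        ∀ x ∈ Ω, ∑ i, pd i (fun y => g i (fun l => pd l u y)) x = 0 :=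
  conservation_law_of_integrating_factor_general f g hg k hrel
end

section
/- Let λ, μ ∈ ℝ, let Ω ⊆ ℝ³ be open with coordinates (x, y, t), and let u, S : Ω → ℝ be C² functions with u_x ≠ 0 and S_x ≠ 0 on Ω, satisfying the Lax pair relations u_x S_t = μ u_t S_x and u_x S_y = λ u_y S_x on Ω. Then (μ − λ) u_x u_{yt} + λ(1 − μ) u_y u_{xt} + μ(λ − 1) u_t u_{xy} = 0 on Ω; that is, u solves the dispersionless Hirota equation a₁ u_x u_{yt} + a₂ u_y u_{xt} + a₃ u_t u_{xy} = 0 with a₁ = μ − λ, a₂ = λ(1 − μ), a₃ = μ(λ − 1), and these constants satisfy a₁ + a₂ + a₃ = 0 and a₁λμ + a₂μ + a₃λ = 0. -/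
open Filter Topology

section PartialDerivatives

variable {n : ℕ} {f g : (Fin n → ℝ) → ℝ} {X : Fin n → ℝ}

lemma differentiableAt_pd (hf : ContDiffAt ℝ 2 f X) (i : Fin n) :
    DifferentiableAt ℝ (pd i f) X :=
  ((hf.fderiv_right (m := 1) (by norm_num)).clm_apply contDiffAt_const).differentiableAt
    one_ne_zero

lemma pd_pd_eq_fderiv_fderiv (hf : ContDiffAt ℝ 2 f X) (i j : Fin n) :
    pd j (pd i f) X = fderiv ℝ (fderiv ℝ f) X (Pi.single j 1) (Pi.single i 1) := by
  have hdf : DifferentiableAt ℝ (fderiv ℝ f) X :=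
    (hf.fderiv_right (m := 1) (by norm_num)).differentiableAt one_ne_zero
  change fderiv ℝ (fun Y => fderiv ℝ f Y (Pi.single i 1)) X (Pi.single j 1) = _
  rw [fderiv_clm_apply hdf (differentiableAt_const _)]
  simp

lemma pd_comm (hf : ContDiffAt ℝ 2 f X) (i j : Fin n) :
    pd j (pd i f) X = pd i (pd j f) X := by
  rw [pd_pd_eq_fderiv_fderiv hf, pd_pd_eq_fderiv_fderiv hf]
  exact hf.isSymmSndFDerivAt (by simp) _ _

lemma pd_congr (h : f =ᶠ[𝓝 X] g) (j : Fin n) : pd j f X = pd j g X := by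
  simp only [pd, h.fderiv_eq]

lemma pd_mul (hf : DifferentiableAt ℝ f X) (hg : DifferentiableAt ℝ g X) (j : Fin n) :
    pd j (fun Y => f Y * g Y) X = pd j f X * g X + f X * pd j g X := by
  simp only [pd, fderiv_fun_mul hf hg, add_apply,
    smul_apply, smul_eq_mul]
  ring

lemma pd_const_mul (c : ℝ) (hf : DifferentiableAt ℝ f X) (j : Fin n) :
    pd j (fun Y => c * f Y) X = c * pd j f X := by
  simp only [pd, fderiv_const_mul hf c, smul_apply, smul_eq_mul]

lemma pd_of_mul_eventuallyEq_const_mul_mul (c : ℝ) {f₁ f₂ g₁ g₂ : (Fin n → ℝ) → ℝ}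
    (hf₁ : DifferentiableAt ℝ f₁ X) (hf₂ : DifferentiableAt ℝ f₂ X)
    (hg₁ : DifferentiableAt ℝ g₁ X) (hg₂ : DifferentiableAt ℝ g₂ X)
    (h : ∀ᶠ Y in 𝓝 X, f₁ Y * f₂ Y = c * g₁ Y * g₂ Y) (j : Fin n) :
    pd j f₁ X * f₂ X + f₁ X * pd j f₂ X = c * (pd j g₁ X * g₂ X + g₁ X * pd j g₂ X) := by
  have hpd : pd j (fun Y => f₁ Y * f₂ Y) X = pd j (fun Y => c * (g₁ Y * g₂ Y)) X :=
    pd_congr (h.mono fun Y hY => by rw [hY, mul_assoc]) j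
  rwa [pd_mul hf₁ hf₂, pd_const_mul c (hg₁.fun_mul hg₂), pd_mul hg₁ hg₂] at hpd

end PartialDerivatives

lemma hirota_of_lax_jets {lam μ ux uy ut uxx uxy uxt uyt Sx Sy St Sxx Sxy Sxt Syt : ℝ}
    (hux : ux ≠ 0) (hSx : Sx ≠ 0)
    (hLax1 : ux * St = μ * ut * Sx) (hLax2 : ux * Sy = lam * uy * Sx)
    (hLax1x : uxx * St + ux * Sxt = μ * (uxt * Sx + ut * Sxx))
    (hLax1y : uxy * St + ux * Syt = μ * (uyt * Sx + ut * Sxy))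
    (hLax2x : uxx * Sy + ux * Sxy = lam * (uxy * Sx + uy * Sxx))
    (hLax2t : uxt * Sy + ux * Syt = lam * (uyt * Sx + uy * Sxt)) :
    (μ - lam) * ux * uyt + lam * (1 - μ) * uy * uxt + μ * (lam - 1) * ut * uxy = 0 := by
  have hprod : Sx * ux *
      ((μ - lam) * ux * uyt + lam * (1 - μ) * uy * uxt + μ * (lam - 1) * ut * uxy) = 0 := by
    linear_combination -ux ^ 2 * hLax1y + ux ^ 2 * hLax2t - μ * ut * ux * hLax2x
      + lam * uy * ux * hLax1x + (ux * uxy - lam * uy * uxx) * hLax1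
      + (μ * ut * uxx - ux * uxt) * hLax2
  exact (mul_eq_zero.mp hprod).resolve_left (mul_ne_zero hSx hux)

/-- Coordinates on `ℝ³` are `x = 0`, `y = 1`, `t = 2`. -/
theorem lax_pair_implies_hirota
    (lam μ : ℝ) (Ω : Set (Fin 3 → ℝ)) (hΩ : IsOpen Ω)
    (u S : (Fin 3 → ℝ) → ℝ)
    (hu : ContDiffOn ℝ 2 u Ω) (hS : ContDiffOn ℝ 2 S Ω)
    (hux : ∀ X ∈ Ω, pd 0 u X ≠ 0) (hSx : ∀ X ∈ Ω, pd 0 S X ≠ 0)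
    (hLax1 : ∀ X ∈ Ω, pd 0 u X * pd 2 S X = μ * pd 2 u X * pd 0 S X)
    (hLax2 : ∀ X ∈ Ω, pd 0 u X * pd 1 S X = lam * pd 1 u X * pd 0 S X) :
    (∀ X ∈ Ω,
      (μ - lam) * pd 0 u X * pd 2 (pd 1 u) X
        + lam * (1 - μ) * pd 1 u X * pd 2 (pd 0 u) X
        + μ * (lam - 1) * pd 2 u X * pd 1 (pd 0 u) X = 0) ∧
    (μ - lam) + lam * (1 - μ) + μ * (lam - 1) = 0 ∧
    (μ - lam) * lam * μ + lam * (1 - μ) * μ + μ * (lam - 1) * lam = 0 := by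
  refine ⟨fun X hX => ?_, by ring, by ring⟩
  have hΩX : Ω ∈ 𝓝 X := hΩ.mem_nhds hX
  have hu₂ : ContDiffAt ℝ 2 u X := hu.contDiffAt hΩX
  have hS₂ : ContDiffAt ℝ 2 S X := hS.contDiffAt hΩX
  have du := differentiableAt_pd hu₂
  have dS := differentiableAt_pd hS₂
  have hLax1' := pd_of_mul_eventuallyEq_const_mul_mul μ (du 0) (dS 2) (du 2) (dS 0)
    (eventually_of_mem hΩX hLax1)
  have hLax2' := pd_of_mul_eventuallyEq_const_mul_mul lam (du 0) (dS 1) (du 1) (dS 0)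
    (eventually_of_mem hΩX hLax2)
  have hLax1x := hLax1' 0
  have hLax1y := hLax1' 1
  have hLax2x := hLax2' 0
  rw [pd_comm hS₂ 2 0, pd_comm hu₂ 2 0] at hLax1x
  rw [pd_comm hS₂ 2 1, pd_comm hu₂ 2 1] at hLax1y
  rw [pd_comm hS₂ 1 0, pd_comm hu₂ 1 0] at hLax2x
  exact hirota_of_lax_jets (hux X hX) (hSx X hX) (hLax1 X hX) (hLax2 X hX)
    hLax1x hLax1y hLax2x (hLax2' 2)
end
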